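/- Let u, v be nonnegative Borel measurable functions on ℝ^N vanishing at infinity. Then for every 1 ≤ p < ∞, ∫_{ℝ^N} |{u,v}⋆|^p dx = ∫_{ℝ^N} |u|^p dx + ∫_{ℝ^N} |v|^p dx (where both sides may be infinite). -/

import Mathlib

/-!
For `t > 0` the set `A⋆(u,v;t)` is the ball of volume `m(t) = |{u > t}| + |{v > t}|`, so
`x ∈ A⋆(u,v;t)` iff `|B(0,‖x‖)| < m(t)`. Hence `{u,v}⋆(x)` is the length of
`{t > 0 : |B(0,‖x‖)| < m(t)}`, a monotone function of `‖x‖`. Because `m` is antitone,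
right-continuous and tends to `0`, for `s > 0` and `x ≠ 0` this length exceeds `s` iff
`x ∈ A⋆(u,v;s)`. So `{u,v}⋆` has distribution function `m`, the sum of those of `u` and `v`,
and the layer-cake formula `∫ f^p = p ∫₀^∞ t^(p-1) |{f > t}| dt` splits accordingly.
(At `x = 0` the length may be infinite and the Bochner integral `{u,v}⋆(0)` is then `0`,
which is harmless on a null set.)
-/

noncomputable section

open MeasureTheory Filter Topology

abbrev EN (N : ℕ) := EuclideanSpace ℝ (Fin N)

/-- A Borel measurable function `u` on `ℝ^N` vanishes at infinity if
`|{x : |u x| > t}| < ∞` for every `t > 0`. -/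
def VanishAtInfinity {N : ℕ} (u : EN N → ℝ) : Prop :=
  ∀ t : ℝ, 0 < t → volume {x : EN N | t < |u x|} < ⊤

/-- `A⋆(u,v;t)`: the open ball `B(0,r)` centered at the origin whose volume equals
`|{u > t}| + |{v > t}|`. -/
def Astar {N : ℕ} (u v : EN N → ℝ) (t : ℝ) : Set (EN N) :=
  Metric.ball 0 (sInf {r : ℝ | 0 ≤ r ∧
    volume {x : EN N | t < u x} + volume {x : EN N | t < v x}
      ≤ volume (Metric.ball (0 : EN N) r)})

/-- The rearrangement `{u,v}⋆(x) = ∫₀^∞ χ_{A⋆(u,v;t)}(x) dt` of Shibata. -/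
def rearr {N : ℕ} (u v : EN N → ℝ) (x : EN N) : ℝ :=
  ∫ t in Set.Ioi (0 : ℝ), (Astar u v t).indicator (fun _ => (1 : ℝ)) x


open Set Metric
open scoped ENNReal

section DistributionFunction

variable {α : Type*} [MeasurableSpace α]

lemma antitone_measure_setOf_lt (μ : Measure α) (f : α → ℝ) :
    Antitone fun t => μ {x | t < f x} :=
  fun _ _ hst => measure_mono fun _ hx => hst.trans_lt hx

lemma continuousWithinAt_measure_setOf_lt (μ : Measure α) (f : α → ℝ) (s : ℝ) :
    ContinuousWithinAt (fun t => μ {x | t < f x}) (Ioi s) s := by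
  have hunion : {x | s < f x} = ⋃ t : Ioi s, {x | (t : ℝ) < f x} := by
    ext x
    simp only [mem_ofPred_eq, mem_iUnion, Subtype.exists, mem_Ioi, exists_prop]
    exact ⟨exists_between, fun ⟨_, hst, htx⟩ => hst.trans htx⟩
  have hanti : Antitone fun t : Ioi s => {x | (t : ℝ) < f x} :=
    fun a _ hab x hx => show (a : ℝ) < f x from lt_of_le_of_lt hab hx
  refine tendsto_order.2 ⟨fun b hb => ?_, fun b hb => ?_⟩
  · change b < μ {x | s < f x} at hb
    rw [hunion, hanti.measure_iUnion] at hb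
    obtain ⟨t, ht⟩ := lt_iSup_iff.1 hb
    filter_upwards [Ioo_mem_nhdsGT t.2] with t' ht'
    exact ht.trans_le (antitone_measure_setOf_lt μ f ht'.2.le)
  · filter_upwards [self_mem_nhdsWithin] with t ht
    exact (antitone_measure_setOf_lt μ f (le_of_lt ht)).trans_lt hb

lemma tendsto_measure_setOf_lt_atTop {μ : Measure α} {f : α → ℝ} (hf : AEMeasurable f μ)
    {t₀ : ℝ} (ht₀ : μ {x | t₀ < f x} ≠ ∞) :
    Tendsto (fun t => μ {x | t < f x}) atTop (𝓝 0) := by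
  have hempty : ⋂ t : ℝ, {x | t < f x} = ∅ :=
    eq_empty_of_forall_notMem fun x hx => lt_irrefl (f x) (mem_iInter.1 hx (f x))
  simpa only [hempty, measure_empty, Function.comp_def] using tendsto_measure_iInter_atTop
    (fun _ => nullMeasurableSet_lt aemeasurable_const hf)
    (fun a _ hab x (hx : _ < f x) => show a < f x from hab.trans_lt hx) ⟨t₀, ht₀⟩

lemma lintegral_rpow_eq_add_of_measure_setOf_lt {μ : Measure α} {f g h : α → ℝ}
    (hf0 : 0 ≤ᵐ[μ] f) (hg0 : 0 ≤ᵐ[μ] g) (hh0 : 0 ≤ᵐ[μ] h)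
    (hf : AEMeasurable f μ) (hg : AEMeasurable g μ) (hh : AEMeasurable h μ)
    (hlevel : ∀ t > 0, μ {x | t < f x} = μ {x | t < g x} + μ {x | t < h x})
    {p : ℝ} (hp : 0 < p) :
    ∫⁻ x, ENNReal.ofReal (f x ^ p) ∂μ =
      ∫⁻ x, ENNReal.ofReal (g x ^ p) ∂μ + ∫⁻ x, ENNReal.ofReal (h x ^ p) ∂μ := by
  rw [lintegral_rpow_eq_lintegral_meas_lt_mul μ hf0 hf hp,
    lintegral_rpow_eq_lintegral_meas_lt_mul μ hg0 hg hp,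
    lintegral_rpow_eq_lintegral_meas_lt_mul μ hh0 hh hp, ← mul_add,
    ← lintegral_add_left (μ := volume.restrict (Ioi 0))
      (f := fun t => μ {x | t < g x} * ENNReal.ofReal (t ^ (p - 1)))
      ((antitone_measure_setOf_lt μ g).measurable.mul
        (measurable_id.pow_const _).ennreal_ofReal)]
  congr 1
  exact setLIntegral_congr_fun measurableSet_Ioi fun t ht => by rw [hlevel t ht, add_mul]

end DistributionFunction

section AntitoneSuperlevel

variable {m : ℝ → ℝ≥0∞} {b : ℝ≥0∞}

lemma ofReal_lt_volume_setOf_lt_inter_Ioi_iff (hm : Antitone m) {s : ℝ} (hs : 0 ≤ s) :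
    ENNReal.ofReal s < volume ({t | b < m t} ∩ Ioi 0) ↔ ∃ t, s < t ∧ b < m t := by
  constructor
  · intro h
    by_contra! hle
    refine h.not_ge ?_
    calc volume ({t | b < m t} ∩ Ioi 0) ≤ volume (Ioc 0 s) :=
          measure_mono fun t ⟨hbt, ht⟩ => ⟨ht, not_lt.1 fun hst => (hle t hst).not_gt hbt⟩
      _ = ENNReal.ofReal s := by rw [Real.volume_Ioc, sub_zero]
  · rintro ⟨t, hst, hbt⟩
    calc ENNReal.ofReal s < ENNReal.ofReal t :=
          ENNReal.ofReal_lt_ofReal_iff'.2 ⟨hst, hs.trans_lt hst⟩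
      _ = volume (Ioc 0 t) := by rw [Real.volume_Ioc, sub_zero]
      _ ≤ volume ({t | b < m t} ∩ Ioi 0) :=
          measure_mono fun t' ⟨ht', ht't⟩ => ⟨hbt.trans_le (hm ht't), ht'⟩

lemma volume_setOf_lt_inter_Ioi_ne_top (hm : Antitone m) {t₀ : ℝ} (ht₀ : m t₀ ≤ b) :
    volume ({t | b < m t} ∩ Ioi 0) ≠ ∞ := by
  refine ne_top_of_le_ne_top (measure_Ioo_lt_top (a := 0) (b := t₀)).ne (measure_mono ?_)
  exact fun t ⟨hbt, ht⟩ => ⟨ht, not_le.1 fun h => (ht₀.trans_lt hbt).not_ge (hm h)⟩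

end AntitoneSuperlevel

section EuclideanBall

variable {N : ℕ}

lemma volume_ball_strictMonoOn (hN : 1 ≤ N) :
    StrictMonoOn (fun r : ℝ => volume (ball (0 : EN N) r)) (Ici 0) := by
  have : Nonempty (Fin N) := ⟨⟨0, hN⟩⟩
  intro r hr r' hr' hrr'
  simp only [Measure.addHaar_ball _ _ hr, Measure.addHaar_ball _ _ hr',
    finrank_euclideanSpace_fin]
  refine ENNReal.mul_lt_mul_left (measure_ball_pos _ _ one_pos).ne' measure_ball_lt_top.ne ?_
  exact (ENNReal.ofReal_lt_ofReal_iff (pow_pos (hr.trans_lt hrr') N)).2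
    (pow_lt_pow_left₀ hrr' hr (by omega))

lemma exists_volume_ball_eq (hN : 1 ≤ N) {a : ℝ≥0∞} (ha : a ≠ ∞) :
    ∃ r, 0 ≤ r ∧ volume (ball (0 : EN N) r) = a := by
  have : Nonempty (Fin N) := ⟨⟨0, hN⟩⟩
  set c := volume (ball (0 : EN N) 1)
  have hc0 : c ≠ 0 := (measure_ball_pos _ _ one_pos).ne'
  have hctop : c ≠ ∞ := measure_ball_lt_top.ne
  have hq : 0 ≤ a.toReal / c.toReal := by positivity
  refine ⟨(a.toReal / c.toReal) ^ (N : ℝ)⁻¹, by positivity, ?_⟩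
  rw [Measure.addHaar_ball _ _ (by positivity), finrank_euclideanSpace_fin,
    Real.rpow_inv_natCast_pow hq (by omega),
    ENNReal.ofReal_div_of_pos (ENNReal.toReal_pos hc0 hctop), ENNReal.ofReal_toReal ha,
    ENNReal.ofReal_toReal hctop, ENNReal.div_mul_cancel hc0 hctop]

lemma sInf_setOf_volume_ball_le_eq (hN : 1 ≤ N) {r : ℝ} (hr : 0 ≤ r) :
    sInf {r' | 0 ≤ r' ∧ volume (ball (0 : EN N) r) ≤ volume (ball (0 : EN N) r')} = r :=
  le_antisymm (csInf_le ⟨0, fun _ h => h.1⟩ ⟨hr, le_rfl⟩)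
    (le_csInf ⟨r, hr, le_rfl⟩ fun _ ⟨hr', h⟩ =>
      ((volume_ball_strictMonoOn hN).le_iff_le hr hr').1 h)

end EuclideanBall

section Rearrangement

variable {N : ℕ} {u v : EN N → ℝ}

def levelVolume (u v : EN N → ℝ) (t : ℝ) : ℝ≥0∞ :=
  volume {x | t < u x} + volume {x | t < v x}

lemma Astar_eq (u v : EN N → ℝ) (t : ℝ) :
    Astar u v t =
      ball 0 (sInf {r | 0 ≤ r ∧ levelVolume u v t ≤ volume (ball (0 : EN N) r)}) :=
  rfl

lemma volume_Astar (hN : 1 ≤ N) {t : ℝ} (ht : levelVolume u v t ≠ ∞) :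
    volume (Astar u v t) = levelVolume u v t := by
  obtain ⟨r, hr, hvol⟩ := exists_volume_ball_eq hN ht
  rw [Astar_eq, ← hvol, sInf_setOf_volume_ball_le_eq hN hr]

lemma mem_Astar_iff (hN : 1 ≤ N) {t : ℝ} (ht : levelVolume u v t ≠ ∞) {x : EN N} :
    x ∈ Astar u v t ↔ volume (ball (0 : EN N) ‖x‖) < levelVolume u v t := by
  obtain ⟨r, hr, hvol⟩ := exists_volume_ball_eq hN ht
  rw [Astar_eq, ← hvol, sInf_setOf_volume_ball_le_eq hN hr, mem_ball_zero_iff,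
    (volume_ball_strictMonoOn hN).lt_iff_lt (norm_nonneg x) hr]

lemma antitone_levelVolume (u v : EN N → ℝ) : Antitone (levelVolume u v) :=
  (antitone_measure_setOf_lt _ u).add (antitone_measure_setOf_lt _ v)

lemma continuousWithinAt_levelVolume (u v : EN N → ℝ) (s : ℝ) :
    ContinuousWithinAt (levelVolume u v) (Ioi s) s :=
  (continuousWithinAt_measure_setOf_lt _ u s).add (continuousWithinAt_measure_setOf_lt _ v s)

lemma VanishAtInfinity.volume_setOf_lt_ne_top (hu : VanishAtInfinity u) (hu0 : ∀ x, 0 ≤ u x)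
    {t : ℝ} (ht : 0 < t) : volume {x | t < u x} ≠ ∞ := by
  simpa only [abs_of_nonneg (hu0 _)] using (hu t ht).ne

lemma levelVolume_ne_top (hu : VanishAtInfinity u) (hv : VanishAtInfinity v)
    (hu0 : ∀ x, 0 ≤ u x) (hv0 : ∀ x, 0 ≤ v x) {t : ℝ} (ht : 0 < t) :
    levelVolume u v t ≠ ∞ :=
  ENNReal.add_ne_top.2 ⟨hu.volume_setOf_lt_ne_top hu0 ht, hv.volume_setOf_lt_ne_top hv0 ht⟩

lemma tendsto_levelVolume_atTop (hum : Measurable u) (hvm : Measurable v)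
    (hfin : levelVolume u v 1 ≠ ∞) : Tendsto (levelVolume u v) atTop (𝓝 0) := by
  rw [← add_zero 0]
  exact (tendsto_measure_setOf_lt_atTop hum.aemeasurable (ENNReal.add_ne_top.1 hfin).1).add
    (tendsto_measure_setOf_lt_atTop hvm.aemeasurable (ENNReal.add_ne_top.1 hfin).2)

lemma rearr_nonneg (u v : EN N → ℝ) (x : EN N) : 0 ≤ rearr u v x :=
  integral_nonneg fun _ => indicator_nonneg (fun _ _ => zero_le_one) x

section Finite

variable (hN : 1 ≤ N) (hfin : ∀ t > 0, levelVolume u v t ≠ ∞)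
include hN hfin

lemma rearr_eq_toReal_volume (x : EN N) :
    rearr u v x =
      (volume ({t | volume (ball (0 : EN N) ‖x‖) < levelVolume u v t} ∩ Ioi 0)).toReal := by
  have hmeas : MeasurableSet {t | volume (ball (0 : EN N) ‖x‖) < levelVolume u v t} :=
    measurableSet_lt measurable_const (antitone_levelVolume u v).measurable
  have hind : EqOn (fun t => (Astar u v t).indicator (fun _ => (1 : ℝ)) x)
      ({t | volume (ball (0 : EN N) ‖x‖) < levelVolume u v t}.indicator fun _ => 1) (Ioi 0) :=
    fun t ht => by simp only [indicator, mem_Astar_iff hN (hfin t ht), mem_ofPred_eq]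
  rw [rearr, setIntegral_congr_fun measurableSet_Ioi hind,
    integral_indicator_const _ hmeas, measureReal_restrict_apply hmeas, smul_eq_mul, mul_one,
    measureReal_def]

lemma measurable_rearr : Measurable (rearr u v) := by
  have hanti : Antitone fun r : ℝ =>
      volume ({t | volume (ball (0 : EN N) r) < levelVolume u v t} ∩ Ioi 0) :=
    fun _ _ hrr' => measure_mono fun _ ⟨hlt, ht⟩ =>
      ⟨(measure_mono (ball_subset_ball hrr')).trans_lt hlt, ht⟩
  rw [funext (rearr_eq_toReal_volume hN hfin)]
  exact (hanti.measurable.comp measurable_norm).ennreal_toReal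

lemma lt_rearr_iff (hum : Measurable u) (hvm : Measurable v) {s : ℝ} (hs : 0 < s)
    {x : EN N} (hx : x ≠ 0) : s < rearr u v x ↔ x ∈ Astar u v s := by
  have hb : 0 < volume (ball (0 : EN N) ‖x‖) := measure_ball_pos _ _ (norm_pos_iff.2 hx)
  obtain ⟨t₀, ht₀⟩ : ∃ t₀, levelVolume u v t₀ ≤ volume (ball (0 : EN N) ‖x‖) :=
    ((tendsto_levelVolume_atTop hum hvm (hfin 1 one_pos)).eventually
      (gt_mem_nhds hb)).exists.imp fun _ => le_of_lt
  rw [rearr_eq_toReal_volume hN hfin, ← ENNReal.ofReal_lt_iff_lt_toReal hs.le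
      (volume_setOf_lt_inter_Ioi_ne_top (antitone_levelVolume u v) ht₀),
    ofReal_lt_volume_setOf_lt_inter_Ioi_iff (antitone_levelVolume u v) hs.le,
    mem_Astar_iff hN (hfin s hs)]
  refine ⟨fun ⟨t, hst, ht⟩ => ht.trans_le (antitone_levelVolume u v hst.le), fun h => ?_⟩
  obtain ⟨t, ht, hst⟩ := (((continuousWithinAt_levelVolume u v s).eventually
    (lt_mem_nhds h)).and self_mem_nhdsWithin).exists
  exact ⟨t, hst, ht⟩

lemma setOf_lt_rearr_ae_eq (hum : Measurable u) (hvm : Measurable v) {s : ℝ} (hs : 0 < s) :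
    {x | s < rearr u v x} =ᵐ[volume] Astar u v s := by
  have : Nonempty (Fin N) := ⟨⟨0, hN⟩⟩
  have hne : ∀ᵐ x : EN N, x ≠ 0 := compl_mem_ae_iff.2 (measure_singleton 0)
  filter_upwards [hne] with x hx
  exact propext (lt_rearr_iff hN hfin hum hvm hs hx)

lemma volume_setOf_lt_rearr (hum : Measurable u) (hvm : Measurable v) {s : ℝ} (hs : 0 < s) :
    volume {x | s < rearr u v x} = levelVolume u v s :=
  (measure_congr (setOf_lt_rearr_ae_eq hN hfin hum hvm hs)).trans (volume_Astar hN (hfin s hs))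

end Finite

end Rearrangement

/-- Lemma 2.1 (iii): `‖{u,v}⋆‖_p^p = ‖u‖_p^p + ‖v‖_p^p` for every `1 ≤ p < ∞`
(as an identity in `[0,∞]`, both sides may be infinite). -/
theorem rearr_Lp_additive
    (N : ℕ) (hN : 1 ≤ N) (u v : EN N → ℝ)
    (hu0 : ∀ x, 0 ≤ u x) (hv0 : ∀ x, 0 ≤ v x)
    (hum : Measurable u) (hvm : Measurable v)
    (huv : VanishAtInfinity u) (hvv : VanishAtInfinity v) :
    ∀ p : ℝ, 1 ≤ p →
      (∫⁻ x, ENNReal.ofReal (|rearr u v x| ^ p)) =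
        (∫⁻ x, ENNReal.ofReal (|u x| ^ p)) + ∫⁻ x, ENNReal.ofReal (|v x| ^ p) := by
  intro p hp
  have hfin : ∀ t > 0, levelVolume u v t ≠ ∞ :=
    fun _ ht => levelVolume_ne_top huv hvv hu0 hv0 ht
  simp only [abs_of_nonneg (rearr_nonneg u v _), abs_of_nonneg (hu0 _), abs_of_nonneg (hv0 _)]
  exact lintegral_rpow_eq_add_of_measure_setOf_lt (ae_of_all _ (rearr_nonneg u v))
    (ae_of_all _ hu0) (ae_of_all _ hv0) (measurable_rearr hN hfin).aemeasurable
    hum.aemeasurable hvm.aemeasurable (fun _ ht => volume_setOf_lt_rearr hN hfin hum hvm ht)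
    (by linarith)
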